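/- For an induced symmetric cq-channel, every input [g] ∈ G/K is non-redundant: W_{[g]} cannot be written as a convex combination Σ_{[g']≠[g]} P([g']) W_{[g']} of the other output states. -/
import Mathlib


open Matrix Finset
open scoped Kronecker ComplexOrder

/-- A density operator: positive semidefinite with unit trace. -/
def IsDensity {m : Type*} [Fintype m] [DecidableEq m] (ρ : Matrix m m ℂ) : Prop :=
  ρ.PosSemidef ∧ ρ.trace = 1

/-- A probability distribution on a finite type. -/
def IsDist {X : Type*} [Fintype X] (P : X → ℝ) : Prop :=
  (∀ x, 0 ≤ P x) ∧ ∑ x, P x = 1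

/-- von Neumann entropy (base 2) of a Hermitian matrix, via its eigenvalues. -/
noncomputable def vNEntropy {m : Type*} [Fintype m] [DecidableEq m]
    (ρ : Matrix m m ℂ) : ℝ :=
  if h : ρ.IsHermitian then ∑ i, -(h.eigenvalues i * Real.logb 2 (h.eigenvalues i)) else 0

/-- The classical-quantum state `Σ_x P(x) |x⟩⟨x| ⊗ W_x`. -/
noncomputable def cqState {X : Type*} [Fintype X] [DecidableEq X] {m : Type*}
    [Fintype m] [DecidableEq m] (P : X → ℝ) (W : X → Matrix m m ℂ) :
    Matrix (X × m) (X × m) ℂ :=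
  fun p q => if p.1 = q.1 then (P p.1 : ℂ) * W p.1 p.2 q.2 else 0

/-- Conditional entropy `H(X|Y)_P = H(XY) - H(Y)` of the cq-state `Σ_x P(x)|x⟩⟨x| ⊗ W_x`. -/
noncomputable def condEntropy {X : Type*} [Fintype X] [DecidableEq X] {m : Type*}
    [Fintype m] [DecidableEq m] (P : X → ℝ) (W : X → Matrix m m ℂ) : ℝ :=
  vNEntropy (cqState P W) - vNEntropy (∑ x, (P x : ℂ) • W x)

/-- Trace norm of a Hermitian matrix (sum of absolute values of eigenvalues). -/
noncomputable def traceNorm {m : Type*} [Fintype m] [DecidableEq m]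
    (A : Matrix m m ℂ) : ℝ :=
  if h : A.IsHermitian then ∑ i, |h.eigenvalues i| else 0

/-- `n`-fold tensor product of a family of matrices. -/
noncomputable def tensorPow {n d : ℕ} (A : Fin n → Matrix (Fin d) (Fin d) ℂ) :
    Matrix (Fin n → Fin d) (Fin n → Fin d) ℂ :=
  fun f g => ∏ i, A i (f i) (g i)

/-- `Ξ^{(n)}_{x^n} := Σ_i I ⊗ ... ⊗ Ξ_{x_i} ⊗ ... ⊗ I`. -/
noncomputable def siteSum {n d : ℕ} (A : Fin n → Matrix (Fin d) (Fin d) ℂ) :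
    Matrix (Fin n → Fin d) (Fin n → Fin d) ℂ :=
  ∑ i, (fun f g => A i (f i) (g i) * ∏ j ∈ univ.erase i, (if f j = g j then (1:ℂ) else 0))

/-- Spectral projection `{A ≥ c}` of a Hermitian matrix. -/
noncomputable def specProj {m : Type*} [Fintype m] [DecidableEq m]
    (A : Matrix m m ℂ) (c : ℝ) : Matrix m m ℂ :=
  if h : A.IsHermitian then
    (h.eigenvectorUnitary : Matrix m m ℂ) *
      Matrix.diagonal (fun i => if c ≤ h.eigenvalues i then (1:ℂ) else 0) *
      (h.eigenvectorUnitary : Matrix m m ℂ)ᴴ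
  else 0

/-- Hermitian functional calculus power `A^r` (real power of eigenvalues). -/
noncomputable def mpow {m : Type*} [Fintype m] [DecidableEq m]
    (A : Matrix m m ℂ) (r : ℝ) : Matrix m m ℂ :=
  if h : A.IsHermitian then
    (h.eigenvectorUnitary : Matrix m m ℂ) *
      Matrix.diagonal (fun i => ((h.eigenvalues i ^ r : ℝ) : ℂ)) *
      (h.eigenvectorUnitary : Matrix m m ℂ)ᴴ
  else 0

/-- Sandwiched Rényi relative entropy of order `α` (base 2). -/
noncomputable def sandwichedRenyi {m : Type*} [Fintype m] [DecidableEq m]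
    (α : ℝ) (ρ σ : Matrix m m ℂ) : ℝ :=
  (α - 1)⁻¹ *
    Real.logb 2
      ((mpow (mpow σ (-(α - 1) / (2 * α)) * ρ * mpow σ (-(α - 1) / (2 * α))) α).trace.re)

/-- Non-redundancy of induced symmetric cq-channels: no output state `W_g` is a
convex combination of the output states of inequivalent inputs. -/
theorem stmt_4 {G : Type*} [Group G] [Fintype G] [DecidableEq G] {d : ℕ}
    (U : G → Matrix (Fin d) (Fin d) ℂ)
    (hU1 : U 1 = 1)
    (hUuni : ∀ g, U g ∈ Matrix.unitaryGroup (Fin d) ℂ)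
    (hproj : ∀ g g', ∃ θ : ℝ, U g * U g' = Complex.exp (θ * Complex.I) • U (g * g'))
    (ρ : Matrix (Fin d) (Fin d) ℂ) (hρ : IsDensity ρ)
    (W : G → Matrix (Fin d) (Fin d) ℂ) (hWdef : ∀ g, W g = U g * ρ * (U g)ᴴ) :
    ∀ g : G, ¬ ∃ Q : G → ℝ, (∀ g', 0 ≤ Q g') ∧ (∀ g', W g' = W g → Q g' = 0) ∧
      (∑ g', Q g') = 1 ∧ W g = ∑ g', (Q g' : ℂ) • W g' := by
  intro g
  rintro ⟨Q, hQ0, hQeq, hQsum, hconv⟩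
  have hρH : ρᴴ = ρ := hρ.1.1
  have hWH : ∀ h : G, (W h)ᴴ = W h := by
    intro h
    rw [hWdef]
    simp [Matrix.conjTranspose_mul, hρH, Matrix.mul_assoc]
  have hUU : ∀ h : G, (U h)ᴴ * U h = 1 := by
    intro h
    have := (hUuni h).1
    simpa [Matrix.star_eq_conjTranspose] using this
  -- purity is invariant
  have hpur : ∀ h : G, ((W h)ᴴ * W h).trace = (ρ * ρ).trace := by
    intro h
    rw [hWH, hWdef]
    have hmm : U h * ρ * (U h)ᴴ * (U h * ρ * (U h)ᴴ) = U h * (ρ * ρ) * (U h)ᴴ := by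
      simp only [Matrix.mul_assoc]
      rw [← Matrix.mul_assoc ((U h)ᴴ) (U h), hUU h, Matrix.one_mul]
    rw [hmm, Matrix.mul_assoc, Matrix.trace_mul_comm, Matrix.mul_assoc, hUU h,
      Matrix.mul_one]
  -- squared Frobenius norm via trace
  have hn2 : ∀ M : Matrix (Fin d) (Fin d) ℂ,
      (Mᴴ * M).trace.re = ∑ i, ∑ j, Complex.normSq (M j i) := by
    intro M
    rw [Matrix.trace]
    rw [Complex.re_sum]
    refine Finset.sum_congr rfl fun i _ => ?_
    rw [Matrix.diag_apply, Matrix.mul_apply, Complex.re_sum]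
    refine Finset.sum_congr rfl fun j _ => ?_
    simp [Matrix.conjTranspose_apply, Complex.normSq_apply, Complex.mul_re]
  have hn2zero : ∀ M : Matrix (Fin d) (Fin d) ℂ,
      (Mᴴ * M).trace.re = 0 → M = 0 := by
    intro M hM
    rw [hn2] at hM
    ext j i
    have h1 : ∀ i ∈ Finset.univ (α := Fin d),
        0 ≤ ∑ j, Complex.normSq (M j i) :=
      fun i _ => Finset.sum_nonneg fun j _ => Complex.normSq_nonneg _
    have h2 := (Finset.sum_eq_zero_iff_of_nonneg h1).mp hM i (Finset.mem_univ i)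
    have h3 := (Finset.sum_eq_zero_iff_of_nonneg
      (fun j _ => Complex.normSq_nonneg (M j i))).mp h2 j (Finset.mem_univ j)
    simpa using Complex.normSq_eq_zero.mp h3
  -- key per-element identity
  have key : ∀ h : G, 2 * ((W g)ᴴ * (W g - W h)).trace.re
      = ((W g - W h)ᴴ * (W g - W h)).trace.re := by
    intro h
    set A := W g with hA
    set B := W h with hB
    have hcc : ((A - B)ᴴ * A).trace = star ((Aᴴ * (A - B)).trace) := by
      rw [← Matrix.trace_conjTranspose]
      congr 1
      rw [Matrix.conjTranspose_mul, Matrix.conjTranspose_conjTranspose]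
    have hsum : (Aᴴ * (A - B)).trace + ((A - B)ᴴ * A).trace
        = ((A - B)ᴴ * (A - B)).trace := by
      have hpA := hpur g
      have hpB := hpur h
      simp only [Matrix.conjTranspose_sub, Matrix.sub_mul, Matrix.mul_sub,
        Matrix.trace_sub]
      rw [← hA, ← hB] at *
      linear_combination hpA - hpB
    rw [hcc] at hsum
    have h2 : ((A - B)ᴴ * (A - B)).trace
        = ((2 * (Aᴴ * (A - B)).trace.re : ℝ) : ℂ) := by
      rw [← hsum]
      exact Complex.add_conj _
    rw [h2]
    simp
  -- the convex combination gives a vanishing sum of nonnegative terms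
  have hQcast : (∑ h : G, (Q h : ℂ)) = 1 := by
    have := congrArg (fun r : ℝ => (r : ℂ)) hQsum
    push_cast at this
    simpa using this
  have hsplit : W g - ∑ h : G, (Q h : ℂ) • W h
      = ∑ h : G, (Q h : ℂ) • (W g - W h) := by
    simp only [smul_sub, Finset.sum_sub_distrib, ← Finset.sum_smul, hQcast, one_smul]
  have h0C : (0 : ℂ) = ∑ h : G, (Q h : ℂ) * ((W g)ᴴ * (W g - W h)).trace := by
    have e1 : ((W g)ᴴ * (W g - ∑ h : G, (Q h : ℂ) • W h)).trace = 0 := by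
      rw [← hconv]
      simp
    rw [hsplit] at e1
    rw [← e1, Matrix.mul_sum]
    rw [Matrix.trace_sum]
    refine Finset.sum_congr rfl fun h _ => ?_
    rw [Matrix.mul_smul, Matrix.trace_smul, smul_eq_mul]
  have h0R : (0 : ℝ) = ∑ h : G, Q h * ((W g)ᴴ * (W g - W h)).trace.re := by
    have := congrArg Complex.re h0C
    rw [Complex.re_sum] at this
    simpa using this
  have hterm_nonneg : ∀ h ∈ Finset.univ (α := G),
      0 ≤ Q h * ((W g)ᴴ * (W g - W h)).trace.re := by
    intro h _
    apply mul_nonneg (hQ0 h)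
    have := key h
    have hpos : 0 ≤ ((W g - W h)ᴴ * (W g - W h)).trace.re := by
      rw [hn2]
      exact Finset.sum_nonneg fun i _ => Finset.sum_nonneg
        fun j _ => Complex.normSq_nonneg _
    linarith
  have hallzero := (Finset.sum_eq_zero_iff_of_nonneg hterm_nonneg).mp h0R.symm
  -- some weight is positive
  have hex : ∃ h : G, 0 < Q h := by
    by_contra hc
    push_neg at hc
    have : ∑ h : G, Q h = 0 :=
      Finset.sum_eq_zero fun h _ => le_antisymm (hc h) (hQ0 h)
    rw [hQsum] at this
    exact one_ne_zero this
  obtain ⟨h₀, hh₀⟩ := hex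
  have hz := hallzero h₀ (Finset.mem_univ h₀)
  have hre : ((W g)ᴴ * (W g - W h₀)).trace.re = 0 := by
    rcases mul_eq_zero.mp hz with h | h
    · exact absurd h (ne_of_gt hh₀)
    · exact h
  have hDzero : W g - W h₀ = 0 := by
    apply hn2zero
    have := key h₀
    rw [hre] at this
    linarith
  have hWeq : W h₀ = W g := by
    have := sub_eq_zero.mp hDzero
    exact this.symm
  exact absurd (hQeq h₀ hWeq) (ne_of_gt hh₀)
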